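/- arXiv:1707.01762 — 2 statements merged into one kernel-verified Lean document; each statement's English description precedes it below -/
import Mathlib

section
/- Suppose that to every α-Hölder function g: Ω → ℝ there are assigned λ_g > 0 and a strictly positive α-Hölder function h_g with L_g h_g = λ_g h_g, and define h^v(μ) = inf over all α-Hölder g of { −∫_Ω g dμ + log λ_g }. Then h^v is affine on the set of shift-invariant Borel probability measures: for all shift-invariant Borel probability measures μ, ν and all t ∈ [0,1], h^v(tμ + (1−t)ν) = t·h^v(μ) + (1−t)·h^v(ν) (in [−∞,0], with the conventions of extended-real arithmetic). -/
open MeasureTheory Filter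
open scoped Classical

noncomputable section

namespace Paper

variable {A : Type*} [MetricSpace A] [CompactSpace A] [MeasurableSpace A] [BorelSpace A]

/-- The left shift `σ` on `Ω = Aᴺ`. -/
def shift (x : ℕ → A) : ℕ → A := fun n => x (n + 1)

/-- Prepend a symbol: `cons a x = (a, x₀, x₁, …)`. -/
def cons (a : A) (x : ℕ → A) : ℕ → A := fun n =>
  match n with
  | 0 => a
  | n + 1 => x n

/-- The metric `d_Ω` on `Ω`. -/
def dOmega (x y : ℕ → A) : ℝ :=
  ∑' n : ℕ, (1 / 2 : ℝ) ^ (n + 1) * (dist (x n) (y n) / (1 + dist (x n) (y n)))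

/-- `f` is `α`-Hölder with respect to `d_Ω`. -/
def IsHolder (α : ℝ) (f : (ℕ → A) → ℝ) : Prop :=
  ∃ C : ℝ, 0 ≤ C ∧ ∀ x y, |f x - f y| ≤ C * dOmega x y ^ α

/-- The Ruelle transfer operator with a priori measure `p`. -/
def ruelle (p : Measure A) (f φ : (ℕ → A) → ℝ) : (ℕ → A) → ℝ :=
  fun x => ∫ a, Real.exp (f (cons a x)) * φ (cons a x) ∂p

/-- The normalized potential `f̄ = f + log h - log (h ∘ σ) - log λ`. -/
def fbar (f h : (ℕ → A) → ℝ) (lam : ℝ) : (ℕ → A) → ℝ :=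
  fun x => f x + Real.log (h x) - Real.log (h (shift x)) - Real.log lam

/-- Projection on the first `n` coordinates. -/
def proj (n : ℕ) (x : ℕ → A) : Fin n → A := fun i => x i

/-- Relative entropy `H(μ|ν)` of two measures, with value `+∞` unless
`μ ≪ ν` and the entropy integral is finite. -/
def relEnt {X : Type*} [MeasurableSpace X] (μ ν : Measure X) : EReal :=
  if μ ≪ ν ∧ Integrable (fun x => Real.log (μ.rnDeriv ν x).toReal) μ then
    ((∫ x, Real.log (μ.rnDeriv ν x).toReal ∂μ : ℝ) : EReal)
  else ⊤

/-- Relative entropy `H_{Λ_n}(μ|ν)` on the σ-algebra of the first `n` coordinates. -/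
def relEntN (n : ℕ) (μ ν : Measure (ℕ → A)) : EReal :=
  relEnt (μ.map (proj n)) (ν.map (proj n))

/-- The entropy `H_{Λ_n}(μ) = -H_{Λ_n}(μ | pᴺ)` relative to the a priori measure `p`. -/
def finEnt (p : Measure A) (μ : Measure (ℕ → A)) (n : ℕ) : EReal :=
  - relEnt (μ.map (proj n)) (Measure.pi fun _ : Fin n => p)

/-- The specific entropy `h^s(μ) = lim_n H_{Λ_n}(μ)/n` (defined as a `limsup`,
which coincides with the limit whenever the latter exists). -/
def specEnt (p : Measure A) (μ : Measure (ℕ → A)) : EReal :=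
  Filter.atTop.limsup fun n : ℕ => ((n : ℝ)⁻¹ : EReal) * finEnt p μ n

/-- Birkhoff sum `S_n(f)`. -/
def birkhoff (n : ℕ) (f : (ℕ → A) → ℝ) (x : ℕ → A) : ℝ :=
  ∑ i ∈ Finset.range n, f (shift^[i] x)

/-- The configuration `x_{Λ_n} y_{Λ_n^c}`. -/
def concatAt (n : ℕ) (x y : ℕ → A) : ℕ → A := fun i => if i < n then x i else y i

/-- Concatenation of a finite word with a configuration. -/
def wordCons (n : ℕ) (a : Fin n → A) (x : ℕ → A) : ℕ → A :=
  fun i => if h : i < n then a ⟨i, h⟩ else x (i - n)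

/-- The entropy `h^v(μ) = inf_g { -∫ g dμ + log λ_g }`, the infimum being taken over
all `α`-Hölder potentials `g`, where `λ_g` is the maximal eigenvalue of `L_g`. -/
def hvEnt (α : ℝ) (lam : ((ℕ → A) → ℝ) → ℝ) (μ : Measure (ℕ → A)) : EReal :=
  sInf {c : EReal | ∃ g : (ℕ → A) → ℝ, IsHolder α g ∧
    c = ((-∫ x, g x ∂μ + Real.log (lam g) : ℝ) : EReal)}


end Paper

/-!
For a fixed potential `g`, the quantity `-∫ g dm + log λ_g` is affine in `m`, so `h^v`, an
infimum of affine functionals, is concave. For the reverse inequality take potentials `g₁, g₂`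
and normalise them: `ḡ = g + log h_g - log h_g ∘ σ - log λ_g` (`fbar`) satisfies `L_ḡ 1 = 1` and
`-∫ ḡ dm = -∫ g dm + log λ_g` for invariant `m`. Mix the normalised potentials into
`G_n = n⁻¹ log W_n` (`mixPotential`), where `W_r = t e^{S_r g₁} + (1 - t) e^{S_r g₂}`
(`birkhoffMix`). Since `∫ W_{r+1}(a x) dp(a) = W_r(x)` and `W_0 = 1`, Hölder's inequality shows
that the geometric mean `u = ∏_{r<n} W_r^{1/n}` (`birkhoffMixGeomMean`) satisfies
`L_{G_n} u ≤ u`, whence `λ_{G_n} ≤ 1`. On the other hand `G_n ≥ n⁻¹ (S_n g₁ + log t)` and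
`G_n ≥ n⁻¹ (S_n g₂ + log (1 - t))`, so `-∫ G_n d(tμ + (1 - t)ν) + log λ_{G_n}` exceeds
`t (-∫ g₁ dμ) + (1 - t) (-∫ g₂ dν)` by at most `n⁻¹` times the entropy of `(t, 1 - t)`.
-/

open Real Topology

theorem EReal.exists_coe_mul_lt_of_mul_iInf_lt {ι : Type*} {f : ι → ℝ} {t : ℝ} (ht : 0 < t)
    {c : EReal} (h : (t : EReal) * ⨅ i, (f i : EReal) < c) : ∃ i, ((t * f i : ℝ) : EReal) < c := by
  have ht' : (0 : EReal) < t := EReal.coe_pos.2 ht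
  rw [EReal.mul_comm, ← EReal.lt_div_iff ht' (EReal.coe_ne_top t)] at h
  obtain ⟨i, hi⟩ := iInf_lt_iff.1 h
  refine ⟨i, ?_⟩
  rwa [EReal.coe_mul, EReal.mul_comm, ← EReal.lt_div_iff ht' (EReal.coe_ne_top t)]

theorem EReal.iInf_eq_mul_iInf_add_mul_iInf {ι : Type*} [Nonempty ι] {f f₁ f₂ : ι → ℝ} {t s : ℝ}
    (ht : 0 < t) (hs : 0 < s) (hf : ∀ i, f i = t * f₁ i + s * f₂ i)
    (hmix : ∀ i j, ⨅ k, (f k : EReal) ≤ ((t * f₁ i + s * f₂ j : ℝ) : EReal)) :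
    ⨅ k, (f k : EReal) = t * (⨅ i, (f₁ i : EReal)) + s * ⨅ j, (f₂ j : EReal) := by
  have mul_iInf_ne_top : ∀ {c : ℝ} (g : ι → ℝ), 0 < c → (c : EReal) * ⨅ i, (g i : EReal) ≠ ⊤ := by
    intro c g hc
    refine ne_top_of_le_ne_top (EReal.coe_ne_top (c * g (Classical.arbitrary ι))) ?_
    rw [EReal.coe_mul]
    exact mul_le_mul_of_nonneg_left (iInf_le _ _) (EReal.coe_nonneg.2 hc.le)
  refine le_antisymm ?_ (le_iInf fun k => ?_)
  · refine EReal.le_add_of_forall_gt (.inr (mul_iInf_ne_top f₂ hs))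
      (.inl (mul_iInf_ne_top f₁ ht)) fun a ha b hb => ?_
    obtain ⟨i, hi⟩ := EReal.exists_coe_mul_lt_of_mul_iInf_lt ht ha
    obtain ⟨j, hj⟩ := EReal.exists_coe_mul_lt_of_mul_iInf_lt hs hb
    exact (hmix i j).trans (by rw [EReal.coe_add]; exact (EReal.add_lt_add hi hj).le)
  · rw [hf k, EReal.coe_add, EReal.coe_mul, EReal.coe_mul]
    exact add_le_add (mul_le_mul_of_nonneg_left (iInf_le _ k) (EReal.coe_nonneg.2 ht.le))
      (mul_le_mul_of_nonneg_left (iInf_le _ k) (EReal.coe_nonneg.2 hs.le))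

theorem Real.add_log_le_log_mul_exp_add {t c : ℝ} (ht : 0 < t) (hc : 0 ≤ c) (a : ℝ) :
    a + log t ≤ log (t * exp a + c) :=
  calc a + log t = log (t * exp a) := by rw [log_mul ht.ne' (exp_ne_zero a), log_exp, add_comm]
    _ ≤ log (t * exp a + c) := log_le_log (by positivity) (le_add_of_nonneg_right hc)

theorem Real.log_mul_exp_add_mul_exp_sub_le {t s : ℝ} (ht : 0 < t) (hs : 0 < s) (a b a' b' : ℝ) :
    log (t * exp a + s * exp b) - log (t * exp a' + s * exp b') ≤ |a - a'| + |b - b'| := by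
  set δ := |a - a'| + |b - b'|
  have hle : t * exp a + s * exp b ≤ exp δ * (t * exp a' + s * exp b') :=
    calc t * exp a + s * exp b ≤ t * exp (δ + a') + s * exp (δ + b') := by
          gcongr <;> linarith [le_abs_self (a - a'), le_abs_self (b - b'), abs_nonneg (a - a'),
            abs_nonneg (b - b')]
      _ = exp δ * (t * exp a' + s * exp b') := by simp only [exp_add]; ring
  calc log (t * exp a + s * exp b) - log (t * exp a' + s * exp b')
      ≤ log (exp δ * (t * exp a' + s * exp b')) - log (t * exp a' + s * exp b') := by
        gcongr
    _ = δ := by rw [log_mul (exp_ne_zero δ) (by positivity), log_exp]; ring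

theorem Real.abs_log_mul_exp_add_mul_exp_sub_le {t s : ℝ} (ht : 0 < t) (hs : 0 < s)
    (a b a' b' : ℝ) :
    |log (t * exp a + s * exp b) - log (t * exp a' + s * exp b')| ≤ |a - a'| + |b - b'| := by
  refine abs_sub_le_iff.2 ⟨log_mul_exp_add_mul_exp_sub_le ht hs a b a' b', ?_⟩
  rw [abs_sub_comm a, abs_sub_comm b]
  exact log_mul_exp_add_mul_exp_sub_le ht hs a' b' a b

theorem Real.abs_log_sub_log_le_div {m a b : ℝ} (hm : 0 < m) (ha : m ≤ a) (hb : m ≤ b) :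
    |log a - log b| ≤ |a - b| / m := by
  have key : ∀ {x y : ℝ}, m ≤ x → m ≤ y → log x - log y ≤ |x - y| / m := by
    intro x y hx hy
    have hx0 : 0 < x := hm.trans_le hx
    have hy0 : 0 < y := hm.trans_le hy
    calc log x - log y = log (x / y) := (log_div hx0.ne' hy0.ne').symm
      _ ≤ x / y - 1 := log_le_sub_one_of_pos (div_pos hx0 hy0)
      _ = (x - y) / y := by field_simp
      _ ≤ |x - y| / y := by gcongr; exact le_abs_self _
      _ ≤ |x - y| / m := div_le_div_of_nonneg_left (abs_nonneg _) hm hy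
  refine abs_sub_le_iff.2 ⟨key ha hb, ?_⟩
  rw [abs_sub_comm]
  exact key hb ha

theorem Continuous.exists_forall_pos_le {X : Type*} [TopologicalSpace X] [CompactSpace X]
    {f : X → ℝ} (hf : Continuous f) (hpos : ∀ x, 0 < f x) : ∃ m, 0 < m ∧ ∀ x, m ≤ f x := by
  cases isEmpty_or_nonempty X
  · exact ⟨1, one_pos, isEmptyElim⟩
  obtain ⟨z, -, hz⟩ := isCompact_univ.exists_isMinOn Set.univ_nonempty hf.continuousOn
  exact ⟨f z, hpos z, fun x => hz (Set.mem_univ x)⟩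

theorem Continuous.integrable_of_compactSpace {X E : Type*} [TopologicalSpace X] [CompactSpace X]
    [MeasurableSpace X] [OpensMeasurableSpace X] [NormedAddCommGroup E] {μ : Measure X}
    [IsFiniteMeasure μ] {f : X → E} (hf : Continuous f) : Integrable f μ :=
  hf.integrable_of_hasCompactSupport (HasCompactSupport.of_compactSpace f)

namespace MeasureTheory

theorem integral_ofReal_smul_add_ofReal_smul {X : Type*} [MeasurableSpace X] {μ ν : Measure X}
    {f : X → ℝ} (hμ : Integrable f μ) (hν : Integrable f ν) {t s : ℝ} (ht : 0 ≤ t) (hs : 0 ≤ s) :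
    ∫ x, f x ∂(ENNReal.ofReal t • μ + ENNReal.ofReal s • ν)
      = t * ∫ x, f x ∂μ + s * ∫ x, f x ∂ν := by
  rw [integral_add_measure (hμ.smul_measure ENNReal.ofReal_ne_top)
    (hν.smul_measure ENNReal.ofReal_ne_top), integral_smul_measure, integral_smul_measure,
    ENNReal.toReal_ofReal ht, ENNReal.toReal_ofReal hs, smul_eq_mul, smul_eq_mul]

theorem integral_prod_rpow_le {X ι : Type*} [MeasurableSpace X] {μ : Measure X} (s : Finset ι)
    {f : ι → X → ℝ} (hf : ∀ i ∈ s, Integrable (f i) μ) (hf0 : ∀ i ∈ s, 0 ≤ f i) {p : ι → ℝ}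
    (hp : ∑ i ∈ s, p i = 1) (hp0 : ∀ i ∈ s, 0 ≤ p i) :
    ∫ x, ∏ i ∈ s, f i x ^ p i ∂μ ≤ ∏ i ∈ s, (∫ x, f i x ∂μ) ^ p i := by
  have hlint : ∀ i ∈ s, ∫⁻ x, ENNReal.ofReal (f i x) ∂μ = ENNReal.ofReal (∫ x, f i x ∂μ) :=
    fun i hi => (ofReal_integral_eq_lintegral_ofReal (hf i hi) (.of_forall (hf0 i hi))).symm
  have hprod : ∀ x, ENNReal.ofReal (∏ i ∈ s, f i x ^ p i)
      = ∏ i ∈ s, ENNReal.ofReal (f i x) ^ p i := fun x => by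
    rw [ENNReal.ofReal_prod_of_nonneg fun i hi => rpow_nonneg (hf0 i hi x) _]
    exact Finset.prod_congr rfl fun i hi =>
      (ENNReal.ofReal_rpow_of_nonneg (hf0 i hi x) (hp0 i hi)).symm
  have hholder := ENNReal.lintegral_prod_norm_pow_le s
    (fun i hi => (hf i hi).aemeasurable.ennreal_ofReal) hp hp0
  have hfin : ∏ i ∈ s, (∫⁻ x, ENNReal.ofReal (f i x) ∂μ) ^ p i ≠ ⊤ :=
    (ENNReal.prod_lt_top fun i hi => by
      rw [hlint i hi]; exact ENNReal.rpow_lt_top_of_nonneg (hp0 i hi) ENNReal.ofReal_ne_top).ne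
  calc ∫ x, ∏ i ∈ s, f i x ^ p i ∂μ
      = (∫⁻ x, ∏ i ∈ s, ENNReal.ofReal (f i x) ^ p i ∂μ).toReal := by
        rw [integral_eq_lintegral_of_nonneg_ae
          (.of_forall fun x => Finset.prod_nonneg fun i hi => rpow_nonneg (hf0 i hi x) _)
          (Finset.aestronglyMeasurable_fun_prod s fun i hi =>
            ((hf i hi).aemeasurable.pow_const (p i)).aestronglyMeasurable)]
        simp_rw [hprod]
    _ ≤ (∏ i ∈ s, (∫⁻ x, ENNReal.ofReal (f i x) ∂μ) ^ p i).toReal :=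
        ENNReal.toReal_mono hfin hholder
    _ = ∏ i ∈ s, (∫ x, f i x ∂μ) ^ p i := by
        rw [ENNReal.toReal_prod]
        refine Finset.prod_congr rfl fun i hi => ?_
        rw [hlint i hi, ← ENNReal.toReal_rpow, ENNReal.toReal_ofReal (integral_nonneg (hf0 i hi))]

end MeasureTheory

namespace Paper

section Shift

variable {A : Type*}

lemma shift_cons (a : A) (x : ℕ → A) : shift (cons a x) = x := rfl

lemma continuous_shift [TopologicalSpace A] : Continuous (shift : (ℕ → A) → ℕ → A) :=
  continuous_pi fun n => continuous_apply (n + 1)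

lemma measurable_shift [MeasurableSpace A] : Measurable (shift : (ℕ → A) → ℕ → A) :=
  measurable_pi_lambda _ fun n => measurable_pi_apply (n + 1)

lemma continuous_cons [TopologicalSpace A] (x : ℕ → A) : Continuous fun a : A => cons a x :=
  continuous_pi fun n => match n with
    | 0 => continuous_id
    | _ + 1 => continuous_const

lemma birkhoff_zero (f : (ℕ → A) → ℝ) : birkhoff 0 f = 0 := by
  funext x
  simp [birkhoff]

lemma birkhoff_succ (n : ℕ) (f : (ℕ → A) → ℝ) (x : ℕ → A) :
    birkhoff (n + 1) f x = f x + birkhoff n f (shift x) := by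
  simp only [birkhoff, Finset.sum_range_succ', Function.iterate_succ_apply,
    Function.iterate_zero_apply]
  ring

lemma continuous_birkhoff [TopologicalSpace A] {f : (ℕ → A) → ℝ} (hf : Continuous f) (n : ℕ) :
    Continuous (birkhoff n f) := by
  induction n with
  | zero => rw [birkhoff_zero]; exact continuous_const
  | succ n ih =>
    rw [funext (birkhoff_succ n f)]
    exact hf.add (ih.comp continuous_shift)

end Shift

section Holder

variable {A : Type*} [MetricSpace A]

def dOmegaTerm (x y : ℕ → A) (n : ℕ) : ℝ :=
  (1 / 2 : ℝ) ^ (n + 1) * (dist (x n) (y n) / (1 + dist (x n) (y n)))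

lemma dOmega_eq_tsum (x y : ℕ → A) : dOmega x y = ∑' n, dOmegaTerm x y n := rfl

lemma dOmegaTerm_nonneg (x y : ℕ → A) (n : ℕ) : 0 ≤ dOmegaTerm x y n := by
  unfold dOmegaTerm; positivity

lemma dOmegaTerm_le (x y : ℕ → A) (n : ℕ) : dOmegaTerm x y n ≤ (1 / 2 : ℝ) ^ (n + 1) := by
  refine mul_le_of_le_one_right (by positivity) ((div_le_one (by positivity)).2 ?_)
  linarith [dist_nonneg (x := x n) (y := y n)]

lemma summable_geometric_half_succ : Summable fun n : ℕ => (1 / 2 : ℝ) ^ (n + 1) :=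
  (summable_geometric_two.mul_right (1 / 2)).congr fun n => by ring

lemma summable_dOmegaTerm (x y : ℕ → A) : Summable (dOmegaTerm x y) :=
  .of_nonneg_of_le (dOmegaTerm_nonneg x y) (dOmegaTerm_le x y) summable_geometric_half_succ

lemma dOmega_nonneg (x y : ℕ → A) : 0 ≤ dOmega x y :=
  tsum_nonneg (dOmegaTerm_nonneg x y)

lemma dOmega_self (x : ℕ → A) : dOmega x x = 0 := by
  simp [dOmega]

lemma dOmega_eq_add_shift (x y : ℕ → A) :
    dOmega x y = dOmegaTerm x y 0 + dOmega (shift x) (shift y) / 2 := by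
  rw [dOmega_eq_tsum, (summable_dOmegaTerm x y).tsum_eq_zero_add, dOmega_eq_tsum, ← tsum_div_const]
  congr 1
  refine tsum_congr fun n => ?_
  simp only [dOmegaTerm, shift]
  ring

lemma dOmega_shift_le (x y : ℕ → A) : dOmega (shift x) (shift y) ≤ 2 * dOmega x y := by
  linarith [dOmega_eq_add_shift x y, dOmegaTerm_nonneg x y 0]

lemma continuous_dOmega_left (y : ℕ → A) : Continuous fun x => dOmega x y := by
  simp_rw [dOmega_eq_tsum]
  refine continuous_tsum (fun n => ?_) summable_geometric_half_succ fun n x => ?_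
  · unfold dOmegaTerm
    have : Continuous fun x : ℕ → A => dist (x n) (y n) :=
      (continuous_apply n).dist continuous_const
    exact continuous_const.mul (this.div (continuous_const.add this) fun x => by positivity)
  · rw [Real.norm_of_nonneg (dOmegaTerm_nonneg x y n)]
    exact dOmegaTerm_le x y n

variable {α : ℝ} {f g φ : (ℕ → A) → ℝ}

lemma IsHolder.continuous (hα : 0 < α) (hf : IsHolder α f) : Continuous f := by
  obtain ⟨C, -, hC⟩ := hf
  refine continuous_iff_continuousAt.2 fun x => tendsto_iff_dist_tendsto_zero.2 ?_
  have hbound : Tendsto (fun y => C * dOmega y x ^ α) (𝓝 x) (𝓝 0) := by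
    have := (((continuous_dOmega_left x).rpow_const fun _ => .inr hα.le).const_mul C).tendsto x
    simpa [dOmega_self, zero_rpow hα.ne'] using this
  exact squeeze_zero (fun _ => dist_nonneg) (fun y => (Real.dist_eq _ _).trans_le (hC y x)) hbound

lemma IsHolder.const (c : ℝ) : IsHolder α fun _ : ℕ → A => c :=
  ⟨0, le_rfl, fun x y => by simp⟩

lemma IsHolder.of_abs_sub_le (hf : IsHolder α f) {K : ℝ} (hK : 0 ≤ K)
    (h : ∀ x y, |φ x - φ y| ≤ K * |f x - f y|) : IsHolder α φ := by
  obtain ⟨C, hC, hCf⟩ := hf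
  refine ⟨K * C, mul_nonneg hK hC, fun x y => (h x y).trans ?_⟩
  rw [mul_assoc]
  exact mul_le_mul_of_nonneg_left (hCf x y) hK

lemma IsHolder.of_abs_sub_le_add (hf : IsHolder α f) (hg : IsHolder α g)
    (h : ∀ x y, |φ x - φ y| ≤ |f x - f y| + |g x - g y|) : IsHolder α φ := by
  obtain ⟨C, hC, hCf⟩ := hf
  obtain ⟨D, hD, hDg⟩ := hg
  refine ⟨C + D, add_nonneg hC hD, fun x y => (h x y).trans ?_⟩
  rw [add_mul]
  exact add_le_add (hCf x y) (hDg x y)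

lemma IsHolder.add (hf : IsHolder α f) (hg : IsHolder α g) : IsHolder α fun x => f x + g x :=
  hf.of_abs_sub_le_add hg fun x y => by rw [add_sub_add_comm]; exact abs_add_le _ _

lemma IsHolder.sub (hf : IsHolder α f) (hg : IsHolder α g) : IsHolder α fun x => f x - g x :=
  hf.of_abs_sub_le_add hg fun x y => by rw [sub_sub_sub_comm]; exact abs_sub _ _

lemma IsHolder.const_mul (hf : IsHolder α f) (c : ℝ) : IsHolder α fun x => c * f x :=
  hf.of_abs_sub_le (abs_nonneg c) fun x y => by rw [← mul_sub, abs_mul]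

lemma IsHolder.log (hf : IsHolder α f) {m : ℝ} (hm : 0 < m) (hfm : ∀ x, m ≤ f x) :
    IsHolder α fun x => log (f x) :=
  hf.of_abs_sub_le (inv_nonneg.2 hm.le) fun x y => by
    rw [inv_mul_eq_div]; exact abs_log_sub_log_le_div hm (hfm x) (hfm y)

lemma IsHolder.log_mul_exp_add_mul_exp {t s : ℝ} (ht : 0 < t) (hs : 0 < s) (hf : IsHolder α f)
    (hg : IsHolder α g) : IsHolder α fun x => Real.log (t * exp (f x) + s * exp (g x)) :=
  hf.of_abs_sub_le_add hg fun _ _ => abs_log_mul_exp_add_mul_exp_sub_le ht hs _ _ _ _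

lemma IsHolder.comp_shift (hα : 0 ≤ α) (hf : IsHolder α f) : IsHolder α fun x => f (shift x) := by
  obtain ⟨C, hC, hCf⟩ := hf
  refine ⟨C * 2 ^ α, by positivity, fun x y => ?_⟩
  calc |f (shift x) - f (shift y)| ≤ C * dOmega (shift x) (shift y) ^ α := hCf _ _
    _ ≤ C * (2 * dOmega x y) ^ α :=
        mul_le_mul_of_nonneg_left (rpow_le_rpow (dOmega_nonneg _ _) (dOmega_shift_le x y) hα) hC
    _ = C * 2 ^ α * dOmega x y ^ α := by rw [mul_rpow zero_le_two (dOmega_nonneg x y)]; ring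

lemma IsHolder.birkhoff (hα : 0 ≤ α) (hf : IsHolder α f) (n : ℕ) : IsHolder α (birkhoff n f) := by
  induction n with
  | zero => rw [birkhoff_zero]; exact IsHolder.const 0
  | succ n ih =>
    rw [funext (birkhoff_succ n f)]
    exact hf.add (ih.comp_shift hα)

lemma IsHolder.fbar [CompactSpace A] (hα : 0 < α) (hf : IsHolder α f) {h : (ℕ → A) → ℝ}
    (hh : IsHolder α h) (hpos : ∀ x, 0 < h x) (c : ℝ) : IsHolder α (fbar f h c) := by
  obtain ⟨m, hm, hmh⟩ := (hh.continuous hα).exists_forall_pos_le hpos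
  have hlog := hh.log hm hmh
  exact ((hf.add hlog).sub (hlog.comp_shift hα.le)).sub (IsHolder.const _)

end Holder

section Ruelle

variable {A : Type*} [MeasurableSpace A] {p : Measure A}

lemma ruelle_fbar_one {f h : (ℕ → A) → ℝ} {c : ℝ} (hpos : ∀ x, 0 < h x) (hc : 0 < c)
    (heig : ∀ x, ruelle p f h x = c * h x) : ruelle p (fbar f h c) 1 = 1 := by
  funext x
  have hint : ∀ a, exp (fbar f h c (cons a x)) * (1 : (ℕ → A) → ℝ) (cons a x)
      = exp (f (cons a x)) * h (cons a x) / (c * h x) := fun a => by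
    simp only [fbar, shift_cons, Pi.one_apply, mul_one, exp_sub, exp_add, exp_log (hpos _),
      exp_log hc]
    field_simp
  change ∫ a, exp (fbar f h c (cons a x)) * (1 : (ℕ → A) → ℝ) (cons a x) ∂p = 1
  simp_rw [hint]
  rw [integral_div]
  change ruelle p f h x / (c * h x) = 1
  rw [heig x, div_self (mul_pos hc (hpos x)).ne']

lemma ruelle_const_mul (G u : (ℕ → A) → ℝ) (c : ℝ) (x : ℕ → A) :
    ruelle p G (fun y => c * u y) x = c * ruelle p G u x := by
  simp only [ruelle, ← integral_const_mul]
  congr 1 with a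
  ring

variable [TopologicalSpace A] [CompactSpace A] [OpensMeasurableSpace A]

lemma ruelle_le_ruelle [IsFiniteMeasure p] {G φ ψ : (ℕ → A) → ℝ} (hG : Continuous G)
    (hφ : Continuous φ) (hψ : Continuous ψ) (hle : ∀ x, φ x ≤ ψ x) (x : ℕ → A) :
    ruelle p G φ x ≤ ruelle p G ψ x := by
  have hG' := (hG.comp (continuous_cons x)).rexp
  exact integral_mono (hG'.mul (hφ.comp (continuous_cons x))).integrable_of_compactSpace
    (hG'.mul (hψ.comp (continuous_cons x))).integrable_of_compactSpace
    fun a => mul_le_mul_of_nonneg_left (hle _) (exp_pos _).le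

/-- Compare `L_G h = c h` with `L_G u ≤ u` at a maximum point of `h / u`. -/
lemma eigenvalue_le_one_of_ruelle_le [IsProbabilityMeasure p] {G h u : (ℕ → A) → ℝ} {c : ℝ}
    (hG : Continuous G) (hh : Continuous h) (hpos : ∀ x, 0 < h x)
    (heig : ∀ x, ruelle p G h x = c * h x) (hu : Continuous u) (hupos : ∀ x, 0 < u x)
    (hsub : ∀ x, ruelle p G u x ≤ u x) : c ≤ 1 := by
  have : Nonempty A := nonempty_of_isProbabilityMeasure p
  obtain ⟨z, -, hz⟩ := isCompact_univ.exists_isMaxOn Set.univ_nonempty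
    (hh.div hu fun x => (hupos x).ne').continuousOn
  set k := h z / u z
  have hk : 0 ≤ k := (div_pos (hpos z) (hupos z)).le
  have hhu : ∀ x, h x ≤ k * u x := fun x => by
    rw [← div_le_iff₀ (hupos x)]; exact hz (Set.mem_univ x)
  have : c * h z ≤ h z :=
    calc c * h z = ruelle p G h z := (heig z).symm
      _ ≤ ruelle p G (fun y => k * u y) z :=
          ruelle_le_ruelle hG hh (continuous_const.mul hu) hhu z
      _ = k * ruelle p G u z := ruelle_const_mul G u k z
      _ ≤ k * u z := mul_le_mul_of_nonneg_left (hsub z) hk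
      _ = h z := div_mul_cancel₀ _ (hupos z).ne'
  exact (mul_le_iff_le_one_left (hpos z)).1 this

end Ruelle

section Invariant

variable {A : Type*} [TopologicalSpace A] [SecondCountableTopology A] [MeasurableSpace A]
  [OpensMeasurableSpace A] {μ : Measure (ℕ → A)}

lemma integral_comp_shift (hμ : μ.map shift = μ) {f : (ℕ → A) → ℝ} (hf : Continuous f) :
    ∫ x, f (shift x) ∂μ = ∫ x, f x ∂μ := by
  conv_rhs => rw [← hμ]
  exact (integral_map measurable_shift.aemeasurable hf.measurable.aestronglyMeasurable).symm

variable [CompactSpace A] [IsProbabilityMeasure μ]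

lemma integral_birkhoff (hμ : μ.map shift = μ) {f : (ℕ → A) → ℝ} (hf : Continuous f) (n : ℕ) :
    ∫ x, birkhoff n f x ∂μ = n * ∫ x, f x ∂μ := by
  induction n with
  | zero => simp [birkhoff_zero]
  | succ n ih =>
    have hS := continuous_birkhoff hf n
    have hSσ : Integrable (fun x => birkhoff n f (shift x)) μ :=
      (hS.comp continuous_shift).integrable_of_compactSpace
    simp_rw [birkhoff_succ]
    rw [integral_add hf.integrable_of_compactSpace hSσ, integral_comp_shift hμ hS, ih]
    push_cast
    ring

lemma integral_fbar (hμ : μ.map shift = μ) {f h : (ℕ → A) → ℝ} (hf : Continuous f)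
    (hh : Continuous h) (hpos : ∀ x, 0 < h x) (c : ℝ) :
    ∫ x, fbar f h c x ∂μ = ∫ x, f x ∂μ - Real.log c := by
  have hlog : Continuous fun x => Real.log (h x) := hh.log fun x => (hpos x).ne'
  have hlogσ := hlog.comp continuous_shift
  simp only [fbar]
  rw [integral_sub, integral_sub, integral_add, integral_comp_shift hμ hlog]
  · simp
  all_goals first
    | exact integrable_const _
    | exact Continuous.integrable_of_compactSpace (by fun_prop)

lemma integral_add_le_of_birkhoff_le (hμ : μ.map shift = μ) {g G : (ℕ → A) → ℝ}
    (hg : Continuous g) (hG : Continuous G) {n : ℕ} (hn : n ≠ 0) (c : ℝ)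
    (h : ∀ x, (n : ℝ)⁻¹ * (birkhoff n g x + c) ≤ G x) :
    ∫ x, g x ∂μ + (n : ℝ)⁻¹ * c ≤ ∫ x, G x ∂μ := by
  have hS := (continuous_birkhoff hg n).integrable_of_compactSpace (μ := μ)
  calc ∫ x, g x ∂μ + (n : ℝ)⁻¹ * c = ∫ x, (n : ℝ)⁻¹ * (birkhoff n g x + c) ∂μ := by
        rw [integral_const_mul, integral_add hS (integrable_const c), integral_birkhoff hμ hg n]
        field_simp
        simp
    _ ≤ ∫ x, G x ∂μ :=
        integral_mono ((hS.add (integrable_const c)).const_mul _) hG.integrable_of_compactSpace h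

end Invariant

section Mix

variable {A : Type*} (t s : ℝ) (g₁ g₂ : (ℕ → A) → ℝ)

def birkhoffMix (r : ℕ) (x : ℕ → A) : ℝ :=
  t * exp (birkhoff r g₁ x) + s * exp (birkhoff r g₂ x)

def mixPotential (n : ℕ) (x : ℕ → A) : ℝ :=
  (n : ℝ)⁻¹ * Real.log (birkhoffMix t s g₁ g₂ n x)

def birkhoffMixGeomMean (n : ℕ) (x : ℕ → A) : ℝ :=
  ∏ r ∈ Finset.range n, birkhoffMix t s g₁ g₂ r x ^ (n : ℝ)⁻¹

variable {t s g₁ g₂}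

lemma mixPotential_comm : mixPotential t s g₁ g₂ = mixPotential s t g₂ g₁ := by
  funext n x
  simp only [mixPotential, birkhoffMix, add_comm]

lemma birkhoffMix_pos (ht : 0 < t) (hs : 0 < s) (r : ℕ) (x : ℕ → A) :
    0 < birkhoffMix t s g₁ g₂ r x := by
  unfold birkhoffMix; positivity

lemma birkhoffMix_zero (hts : t + s = 1) (x : ℕ → A) : birkhoffMix t s g₁ g₂ 0 x = 1 := by
  simp [birkhoffMix, birkhoff_zero, hts]

lemma birkhoffMix_succ_cons (r : ℕ) (a : A) (x : ℕ → A) :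
    birkhoffMix t s g₁ g₂ (r + 1) (cons a x)
      = t * exp (birkhoff r g₁ x) * exp (g₁ (cons a x))
        + s * exp (birkhoff r g₂ x) * exp (g₂ (cons a x)) := by
  simp only [birkhoffMix, birkhoff_succ, shift_cons, exp_add]
  ring

lemma birkhoff_add_log_le_mixPotential (ht : 0 < t) (hs : 0 < s) (n : ℕ) (x : ℕ → A) :
    (n : ℝ)⁻¹ * (birkhoff n g₁ x + Real.log t) ≤ mixPotential t s g₁ g₂ n x :=
  mul_le_mul_of_nonneg_left (add_log_le_log_mul_exp_add ht (by positivity) _) (by positivity)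

lemma exp_mixPotential_mul_birkhoffMixGeomMean (ht : 0 < t) (hs : 0 < s) (hts : t + s = 1)
    (n : ℕ) (x : ℕ → A) :
    exp (mixPotential t s g₁ g₂ n x) * birkhoffMixGeomMean t s g₁ g₂ n x
      = ∏ r ∈ Finset.range n, birkhoffMix t s g₁ g₂ (r + 1) x ^ (n : ℝ)⁻¹ := by
  rw [mixPotential, mul_comm (n : ℝ)⁻¹, ← rpow_def_of_pos (birkhoffMix_pos ht hs n x),
    birkhoffMixGeomMean, mul_comm, ← Finset.prod_range_succ, Finset.prod_range_succ',
    birkhoffMix_zero hts, one_rpow, mul_one]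

lemma IsHolder.mixPotential [MetricSpace A] {α : ℝ} (hα : 0 ≤ α) (ht : 0 < t) (hs : 0 < s)
    (hg₁ : IsHolder α g₁) (hg₂ : IsHolder α g₂) (n : ℕ) :
    IsHolder α (mixPotential t s g₁ g₂ n) :=
  ((hg₁.birkhoff hα n).log_mul_exp_add_mul_exp ht hs (hg₂.birkhoff hα n)).const_mul _

variable [TopologicalSpace A]

lemma continuous_birkhoffMix (h₁ : Continuous g₁) (h₂ : Continuous g₂) (r : ℕ) :
    Continuous (birkhoffMix t s g₁ g₂ r) := by
  have := continuous_birkhoff h₁ r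
  have := continuous_birkhoff h₂ r
  unfold birkhoffMix
  fun_prop

lemma continuous_mixPotential (ht : 0 < t) (hs : 0 < s) (h₁ : Continuous g₁)
    (h₂ : Continuous g₂) (n : ℕ) : Continuous (mixPotential t s g₁ g₂ n) :=
  continuous_const.mul
    ((continuous_birkhoffMix h₁ h₂ n).log fun x => (birkhoffMix_pos ht hs n x).ne')

lemma continuous_birkhoffMixGeomMean (ht : 0 < t) (hs : 0 < s) (h₁ : Continuous g₁)
    (h₂ : Continuous g₂) (n : ℕ) : Continuous (birkhoffMixGeomMean t s g₁ g₂ n) :=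
  continuous_finsetProd _ fun r _ =>
    (continuous_birkhoffMix h₁ h₂ r).rpow_const fun x => .inl (birkhoffMix_pos ht hs r x).ne'

variable [CompactSpace A] [MeasurableSpace A] [OpensMeasurableSpace A] {p : Measure A}
  [IsFiniteMeasure p]

lemma integral_birkhoffMix_succ_cons (h₁ : Continuous g₁) (h₂ : Continuous g₂)
    (hn₁ : ruelle p g₁ 1 = 1) (hn₂ : ruelle p g₂ 1 = 1) (r : ℕ) (x : ℕ → A) :
    ∫ a, birkhoffMix t s g₁ g₂ (r + 1) (cons a x) ∂p = birkhoffMix t s g₁ g₂ r x := by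
  have hnorm : ∀ {g : (ℕ → A) → ℝ}, ruelle p g 1 = 1 → ∫ a, exp (g (cons a x)) ∂p = 1 :=
    fun hn => by simpa [ruelle] using congrFun hn x
  have hint : ∀ {g : (ℕ → A) → ℝ} (c : ℝ), Continuous g →
      Integrable (fun a => c * exp (g (cons a x))) p :=
    fun c hg => (continuous_const.mul (hg.comp (continuous_cons x)).rexp).integrable_of_compactSpace
  simp_rw [birkhoffMix_succ_cons]
  rw [integral_add (hint _ h₁) (hint _ h₂), integral_const_mul, integral_const_mul, hnorm hn₁,
    hnorm hn₂, mul_one, mul_one, birkhoffMix]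

lemma ruelle_mixPotential_birkhoffMixGeomMean_le (ht : 0 < t) (hs : 0 < s) (hts : t + s = 1)
    (h₁ : Continuous g₁) (h₂ : Continuous g₂) (hn₁ : ruelle p g₁ 1 = 1)
    (hn₂ : ruelle p g₂ 1 = 1) {n : ℕ} (hn : n ≠ 0) (x : ℕ → A) :
    ruelle p (mixPotential t s g₁ g₂ n) (birkhoffMixGeomMean t s g₁ g₂ n) x
      ≤ birkhoffMixGeomMean t s g₁ g₂ n x := by
  have hsum : ∑ _r ∈ Finset.range n, (n : ℝ)⁻¹ = 1 := by
    rw [Finset.sum_const, Finset.card_range, nsmul_eq_mul, mul_inv_cancel₀ (Nat.cast_ne_zero.2 hn)]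
  calc ruelle p (mixPotential t s g₁ g₂ n) (birkhoffMixGeomMean t s g₁ g₂ n) x
      = ∫ a, ∏ r ∈ Finset.range n, birkhoffMix t s g₁ g₂ (r + 1) (cons a x) ^ (n : ℝ)⁻¹ ∂p := by
        simp only [ruelle, exp_mixPotential_mul_birkhoffMixGeomMean ht hs hts]
    _ ≤ ∏ r ∈ Finset.range n, (∫ a, birkhoffMix t s g₁ g₂ (r + 1) (cons a x) ∂p) ^ (n : ℝ)⁻¹ :=
        integral_prod_rpow_le _
          (fun r _ => ((continuous_birkhoffMix h₁ h₂ _).comp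
            (continuous_cons x)).integrable_of_compactSpace)
          (fun r _ a => (birkhoffMix_pos ht hs _ _).le) hsum (fun _ _ => by positivity)
    _ = birkhoffMixGeomMean t s g₁ g₂ n x := by
        simp only [integral_birkhoffMix_succ_cons h₁ h₂ hn₁ hn₂, birkhoffMixGeomMean]

lemma integral_mixPotential_ge [SecondCountableTopology A] {μ ν : Measure (ℕ → A)}
    [IsProbabilityMeasure μ] [IsProbabilityMeasure ν] (hμ : μ.map shift = μ)
    (hν : ν.map shift = ν) (ht : 0 < t) (hs : 0 < s) (h₁ : Continuous g₁) (h₂ : Continuous g₂)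
    {n : ℕ} (hn : n ≠ 0) :
    t * ∫ x, g₁ x ∂μ + s * ∫ x, g₂ x ∂ν + (n : ℝ)⁻¹ * (t * Real.log t + s * Real.log s)
      ≤ ∫ x, mixPotential t s g₁ g₂ n x ∂(ENNReal.ofReal t • μ + ENNReal.ofReal s • ν) := by
  have hG := continuous_mixPotential ht hs h₁ h₂ n
  have hμG := integral_add_le_of_birkhoff_le hμ h₁ hG hn (Real.log t)
    (birkhoff_add_log_le_mixPotential ht hs n)
  have hνG := integral_add_le_of_birkhoff_le hν h₂ hG hn (Real.log s)
    (mixPotential_comm (t := t) ▸ birkhoff_add_log_le_mixPotential hs ht n)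
  rw [integral_ofReal_smul_add_ofReal_smul hG.integrable_of_compactSpace
    hG.integrable_of_compactSpace ht.le hs.le]
  linarith [mul_le_mul_of_nonneg_left hμG ht.le, mul_le_mul_of_nonneg_left hνG hs.le]

end Mix


section Entropy

variable {A : Type*} [MetricSpace A] [MeasurableSpace A]

lemma hvEnt_eq_iInf (α : ℝ) (lam : ((ℕ → A) → ℝ) → ℝ) (m : Measure (ℕ → A)) :
    hvEnt α lam m
      = ⨅ g : {g : (ℕ → A) → ℝ // IsHolder α g},
          ((-∫ x, g.1 x ∂m + Real.log (lam g.1) : ℝ) : EReal) := by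
  rw [hvEnt, ← sInf_range]
  congr 1
  ext c
  constructor
  · rintro ⟨g, hg, rfl⟩
    exact ⟨⟨g, hg⟩, rfl⟩
  · rintro ⟨⟨g, hg⟩, rfl⟩
    exact ⟨g, hg, rfl⟩

variable [CompactSpace A] [OpensMeasurableSpace A] {p : Measure A} [IsProbabilityMeasure p]
  {α : ℝ} {lam : ((ℕ → A) → ℝ) → ℝ} {eigf : ((ℕ → A) → ℝ) → ((ℕ → A) → ℝ)}
  {μ ν : Measure (ℕ → A)} [IsProbabilityMeasure μ] [IsProbabilityMeasure ν] {t s : ℝ}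

lemma hvEnt_le_of_ruelle_one (hα : 0 < α) (hlam : ∀ g, IsHolder α g → 0 < lam g)
    (heigf : ∀ g, IsHolder α g → IsHolder α (eigf g) ∧ (∀ x, 0 < eigf g x) ∧
      ∀ x, ruelle p g (eigf g) x = lam g * eigf g x)
    (hμ : μ.map shift = μ) (hν : ν.map shift = ν) (ht : 0 < t) (hs : 0 < s) (hts : t + s = 1)
    {g₁ g₂ : (ℕ → A) → ℝ} (hg₁ : IsHolder α g₁) (hg₂ : IsHolder α g₂)
    (hn₁ : ruelle p g₁ 1 = 1) (hn₂ : ruelle p g₂ 1 = 1) :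
    hvEnt α lam (ENNReal.ofReal t • μ + ENNReal.ofReal s • ν)
      ≤ ((t * -∫ x, g₁ x ∂μ + s * -∫ x, g₂ x ∂ν : ℝ) : EReal) := by
  set c := t * -∫ x, g₁ x ∂μ + s * -∫ x, g₂ x ∂ν
  set K := -(t * Real.log t + s * Real.log s)
  have hbound : ∀ n : ℕ, n ≠ 0 →
      hvEnt α lam (ENNReal.ofReal t • μ + ENNReal.ofReal s • ν)
        ≤ ((c + (n : ℝ)⁻¹ * K : ℝ) : EReal) := by
    intro n hn
    have hG := IsHolder.mixPotential hα.le ht hs hg₁ hg₂ n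
    obtain ⟨hh, hpos, heig⟩ := heigf _ hG
    have hlam_le : lam (mixPotential t s g₁ g₂ n) ≤ 1 :=
      eigenvalue_le_one_of_ruelle_le (hG.continuous hα) (hh.continuous hα) hpos heig
        (continuous_birkhoffMixGeomMean ht hs (hg₁.continuous hα) (hg₂.continuous hα) n)
        (fun x => Finset.prod_pos fun r _ => rpow_pos_of_pos (birkhoffMix_pos ht hs r x) _)
        (ruelle_mixPotential_birkhoffMixGeomMean_le ht hs hts (hg₁.continuous hα)
          (hg₂.continuous hα) hn₁ hn₂ hn)
    have hlog := Real.log_nonpos (hlam _ hG).le hlam_le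
    have hint := integral_mixPotential_ge hμ hν ht hs (hg₁.continuous hα) (hg₂.continuous hα) hn
    rw [hvEnt_eq_iInf]
    refine (iInf_le _ ⟨_, hG⟩).trans (EReal.coe_le_coe_iff.2 ?_)
    linarith
  have hlim : Tendsto (fun n : ℕ => ((c + (n : ℝ)⁻¹ * K : ℝ) : EReal)) atTop (𝓝 (c : EReal)) := by
    refine EReal.tendsto_coe.2 ?_
    simpa using tendsto_const_nhds.add (tendsto_inv_atTop_nhds_zero_nat.mul_const K)
  exact ge_of_tendsto hlim ((eventually_ne_atTop 0).mono hbound)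

lemma hvEnt_le_mix (hα : 0 < α) (hlam : ∀ g, IsHolder α g → 0 < lam g)
    (heigf : ∀ g, IsHolder α g → IsHolder α (eigf g) ∧ (∀ x, 0 < eigf g x) ∧
      ∀ x, ruelle p g (eigf g) x = lam g * eigf g x)
    (hμ : μ.map shift = μ) (hν : ν.map shift = ν) (ht : 0 < t) (hs : 0 < s) (hts : t + s = 1)
    {g₁ g₂ : (ℕ → A) → ℝ} (hg₁ : IsHolder α g₁) (hg₂ : IsHolder α g₂) :
    hvEnt α lam (ENNReal.ofReal t • μ + ENNReal.ofReal s • ν)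
      ≤ ((t * (-∫ x, g₁ x ∂μ + Real.log (lam g₁)) + s * (-∫ x, g₂ x ∂ν + Real.log (lam g₂)) : ℝ)
          : EReal) := by
  obtain ⟨hh₁, hpos₁, heig₁⟩ := heigf g₁ hg₁
  obtain ⟨hh₂, hpos₂, heig₂⟩ := heigf g₂ hg₂
  have hF₁ : -∫ x, g₁ x ∂μ + Real.log (lam g₁) = -∫ x, fbar g₁ (eigf g₁) (lam g₁) x ∂μ := by
    rw [integral_fbar hμ (hg₁.continuous hα) (hh₁.continuous hα) hpos₁]; ring
  have hF₂ : -∫ x, g₂ x ∂ν + Real.log (lam g₂) = -∫ x, fbar g₂ (eigf g₂) (lam g₂) x ∂ν := by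
    rw [integral_fbar hν (hg₂.continuous hα) (hh₂.continuous hα) hpos₂]; ring
  rw [hF₁, hF₂]
  exact hvEnt_le_of_ruelle_one hα hlam heigf hμ hν ht hs hts (hg₁.fbar hα hh₁ hpos₁ _)
    (hg₂.fbar hα hh₂ hpos₂ _) (ruelle_fbar_one hpos₁ (hlam g₁ hg₁) heig₁)
    (ruelle_fbar_one hpos₂ (hlam g₂ hg₂) heig₂)

end Entropy

variable {A : Type*} [MetricSpace A] [CompactSpace A] [MeasurableSpace A] [BorelSpace A]

theorem statement5_general
    (p : Measure A) [IsProbabilityMeasure p]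
    (α : ℝ) (hα0 : 0 < α)
    (lam : ((ℕ → A) → ℝ) → ℝ) (eigf : ((ℕ → A) → ℝ) → ((ℕ → A) → ℝ))
    (hlam : ∀ g, IsHolder α g → 0 < lam g)
    (heigf : ∀ g, IsHolder α g → IsHolder α (eigf g) ∧ (∀ x, 0 < eigf g x) ∧
      ∀ x, ruelle p g (eigf g) x = lam g * eigf g x)
    (μ ν : Measure (ℕ → A)) [IsProbabilityMeasure μ] [IsProbabilityMeasure ν]
    (hμ : μ.map shift = μ) (hν : ν.map shift = ν)
    (t : ℝ) (ht0 : 0 ≤ t) (ht1 : t ≤ 1) :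
    hvEnt α lam (ENNReal.ofReal t • μ + ENNReal.ofReal (1 - t) • ν)
      = ((t : ℝ) : EReal) * hvEnt α lam μ + (((1 - t : ℝ)) : EReal) * hvEnt α lam ν := by
  rcases ht0.eq_or_lt with rfl | ht
  · simp
  rcases ht1.eq_or_lt with rfl | ht1
  · simp
  have hs : 0 < 1 - t := sub_pos.2 ht1
  have : Nonempty {g : (ℕ → A) → ℝ // IsHolder α g} := ⟨⟨0, IsHolder.const 0⟩⟩
  simp only [hvEnt_eq_iInf]
  refine EReal.iInf_eq_mul_iInf_add_mul_iInf ht hs (fun g => ?_) fun g₁ g₂ => ?_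
  · have hg := g.2.continuous hα0
    rw [integral_ofReal_smul_add_ofReal_smul hg.integrable_of_compactSpace
      hg.integrable_of_compactSpace ht.le hs.le]
    ring
  · rw [← hvEnt_eq_iInf]
    exact hvEnt_le_mix hα0 hlam heigf hμ hν ht hs (add_sub_cancel t 1) g₁.2 g₂.2

/-- If to every `α`-Hölder `g` there are assigned `λ_g > 0` and a strictly
positive `α`-Hölder eigenfunction `h_g` with `L_g h_g = λ_g h_g`, then `h^v` is affine on
shift-invariant Borel probability measures:
`h^v(tμ + (1-t)ν) = t h^v(μ) + (1-t) h^v(ν)` for `t ∈ [0,1]`. -/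
theorem statement5
    (p : Measure A) [IsProbabilityMeasure p]
    (hsupp : ∀ U : Set A, IsOpen U → U.Nonempty → 0 < p U)
    (α : ℝ) (hα0 : 0 < α) (hα1 : α < 1)
    (lam : ((ℕ → A) → ℝ) → ℝ) (eigf : ((ℕ → A) → ℝ) → ((ℕ → A) → ℝ))
    (hlam : ∀ g, IsHolder α g → 0 < lam g)
    (heigf : ∀ g, IsHolder α g → IsHolder α (eigf g) ∧ (∀ x, 0 < eigf g x) ∧
      ∀ x, ruelle p g (eigf g) x = lam g * eigf g x)
    (μ ν : Measure (ℕ → A)) [IsProbabilityMeasure μ] [IsProbabilityMeasure ν]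
    (hμ : μ.map shift = μ) (hν : ν.map shift = ν)
    (t : ℝ) (ht0 : 0 ≤ t) (ht1 : t ≤ 1) :
    hvEnt α lam (ENNReal.ofReal t • μ + ENNReal.ofReal (1 - t) • ν)
      = ((t : ℝ) : EReal) * hvEnt α lam μ + (((1 - t : ℝ)) : EReal) * hvEnt α lam ν :=
  statement5_general p α hα0 lam eigf hlam heigf μ ν hμ hν t ht0 ht1

end Paper
end
end

section
/- Let ν be an ergodic shift-invariant Borel probability measure on Ω and μ a shift-invariant Borel probability measure on Ω. If sup_{n≥1} H_{Λ_n}(μ | ν) < ∞, then μ = ν. -/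
/-!
For a cylinder set `F` of `Λ_n` write `p = μ F`, `q = ν F`. Restricting both measures to `F`
and applying Jensen's inequality gives `p log (p / q) + q - p ≤ H_{Λ_n}(μ|ν) ≤ C`, so
`ν F < ε exp (-(C + 1) / ε)` forces `μ F ≤ ε`, with a modulus independent of `n`.
Cylinder sets approximate every Borel set in `μ + ν`-measure, hence `μ ≪ ν`; a shift-invariant
measure that is absolutely continuous with respect to an ergodic one coincides with it.
-/

open MeasureTheory Filter
open scoped Classical

noncomputable section

namespace Paper

variable {A : Type*} [MetricSpace A] [CompactSpace A] [MeasurableSpace A] [BorelSpace A]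

section KullbackLeibler

open InformationTheory Real Set

variable {X : Type*} {mX : MeasurableSpace X} {μ ν : Measure X} {s : Set X}

lemma rnDeriv_restrict_restrict [μ.HaveLebesgueDecomposition ν] [SigmaFinite ν]
    (hμν : μ ≪ ν) (hs : MeasurableSet s) :
    (μ.restrict s).rnDeriv (ν.restrict s) =ᵐ[ν.restrict s] μ.rnDeriv ν := by
  conv_lhs => rw [← Measure.withDensity_rnDeriv_eq μ ν hμν, restrict_withDensity hs]
  exact Measure.rnDeriv_withDensity _ (Measure.measurable_rnDeriv μ ν)

lemma klDiv_restrict_le [IsFiniteMeasure μ] [IsFiniteMeasure ν] (hs : MeasurableSet s) :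
    klDiv (μ.restrict s) (ν.restrict s) ≤ klDiv μ ν := by
  by_cases hμν : μ ≪ ν
  · rw [klDiv_eq_lintegral_klFun_of_ac (hμν.restrict s), klDiv_eq_lintegral_klFun_of_ac hμν,
      lintegral_congr_ae <| by
        filter_upwards [rnDeriv_restrict_restrict hμν hs] with x hx
        rw [hx]]
    exact setLIntegral_le_lintegral s _
  · simp [hμν]

lemma ofReal_mul_log_div_le_klDiv [IsFiniteMeasure μ] [IsFiniteMeasure ν] (hs : MeasurableSet s) :
    ENNReal.ofReal (μ.real s * log (μ.real s / ν.real s) + ν.real s - μ.real s)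
      ≤ klDiv μ ν := by
  simpa only [measureReal_restrict_apply_univ] using
    (mul_log_le_klDiv (μ.restrict s) (ν.restrict s)).trans (klDiv_restrict_le hs)

lemma le_of_mul_log_div_le {K ε p q : ℝ} (hK : 0 ≤ K) (hε : 0 < ε) (hq : 0 < q)
    (hqε : q < ε * exp (-(K + 1) / ε)) (hpq : p * log (p / q) ≤ K + 1) : p ≤ ε := by
  by_contra! hεp
  have hp : 0 < p := hε.trans hεp
  have hlog : (K + 1) / ε < log (p / q) := by
    rw [lt_log_iff_exp_lt (div_pos hp hq), lt_div_iff₀ hq]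
    calc exp ((K + 1) / ε) * q < exp ((K + 1) / ε) * (ε * exp (-(K + 1) / ε)) := by gcongr
      _ = ε := by rw [neg_div, exp_neg]; field_simp
      _ < p := hεp
  have : K + 1 < p * log (p / q) := calc
    K + 1 = ε * ((K + 1) / ε) := by field_simp
    _ < p * log (p / q) := mul_lt_mul'' hεp hlog hε.le (by positivity)
  linarith

lemma measureReal_le_of_klDiv_le [IsProbabilityMeasure μ] [IsProbabilityMeasure ν] {K ε : ℝ}
    (hKL : klDiv μ ν ≤ ENNReal.ofReal K) (hK : 0 ≤ K) (hε : 0 < ε) (hs : MeasurableSet s)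
    (hνs : ν.real s < ε * exp (-(K + 1) / ε)) : μ.real s ≤ ε := by
  have hμν : μ ≪ ν := (klDiv_ne_top_iff.1 (ne_top_of_le_ne_top ENNReal.ofReal_ne_top hKL)).1
  rcases eq_or_ne (ν s) 0 with hνs0 | hνs0
  · simp [measureReal_def, hμν hνs0, hε.le]
  have hq : 0 < ν.real s := ENNReal.toReal_pos hνs0 (measure_ne_top ν s)
  refine le_of_mul_log_div_le hK hε hq hνs ?_
  have := (ENNReal.ofReal_le_ofReal_iff hK).1 ((ofReal_mul_log_div_le_klDiv hs).trans hKL)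
  linarith [measureReal_le_one (μ := μ) (s := s)]

lemma relEnt_eq_klDiv [IsProbabilityMeasure μ] [IsProbabilityMeasure ν] :
    relEnt μ ν = klDiv μ ν := by
  unfold relEnt
  split_ifs with h
  · have hnonneg : 0 ≤ ∫ x, llr μ ν x ∂μ := by
      simpa only [probReal_univ, add_sub_cancel_right]
        using integral_llr_add_sub_measure_univ_nonneg h.1 h.2
    rw [klDiv_of_ac_of_integrable h.1 h.2, probReal_univ, probReal_univ, add_sub_cancel_right,
      EReal.coe_ennreal_ofReal, max_eq_left hnonneg]
    rfl
  · rw [klDiv_eq_top_iff.2 fun h1 h2 => h ⟨h1, h2⟩]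
    rfl

end KullbackLeibler

section Approximation

open Set MeasurableSpace
open scoped symmDiff

variable {X : Type*} {mX : MeasurableSpace X} {μ ν : Measure X}

lemma measureReal_lt_of_add_measure_lt {s : Set X} {r : ℝ}
    (h : (μ + ν) s < ENNReal.ofReal r) : μ.real s < r :=
  ENNReal.toReal_lt_of_lt_ofReal (le_self_add.trans_lt (Measure.add_apply μ ν s ▸ h))

lemma measureReal_le_add_measureReal_symmDiff [IsFiniteMeasure μ] (s t : Set X) :
    μ.real s ≤ μ.real t + μ.real (t ∆ s) :=
  (measureReal_mono fun x hx => by by_cases x ∈ t <;> simp_all [mem_symmDiff]).trans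
    (measureReal_union_le _ _)

lemma absolutelyContinuous_of_isSetRing [IsFiniteMeasure μ] [IsFiniteMeasure ν]
    {C : Set (Set X)} (hC : IsSetRing C) (hCuniv : univ ∈ C) (hgen : mX = generateFrom C)
    (h : ∀ ε > 0, ∃ δ > 0, ∀ t ∈ C, ν.real t < δ → μ.real t ≤ ε) : μ ≪ ν := by
  refine Measure.AbsolutelyContinuous.mk fun E hE hνE => ?_
  rw [← measureReal_eq_zero_iff]
  refine le_antisymm (le_of_forall_pos_le_add fun ε hε => ?_) measureReal_nonneg
  obtain ⟨δ, hδ, hCδ⟩ := h (ε / 2) (half_pos hε)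
  obtain ⟨t, htC, ht⟩ := exists_measure_symmDiff_lt_of_generateFrom_isSetRing (μ := μ + ν) hC
    ⟨{univ}, countable_singleton _, singleton_subset_iff.2 hCuniv, by simp⟩ hgen hE
    (ε := ENNReal.ofReal (min δ (ε / 2))) (by positivity)
  have hμ : μ.real (t ∆ E) < ε / 2 :=
    (measureReal_lt_of_add_measure_lt ht).trans_le (min_le_right _ _)
  have hν : ν.real (t ∆ E) < δ :=
    (measureReal_lt_of_add_measure_lt (add_comm μ ν ▸ ht)).trans_le (min_le_left _ _)
  have hνt : ν.real t < δ := by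
    have hνE' : ν.real E = 0 := by simp [measureReal_def, hνE]
    have := measureReal_le_add_measureReal_symmDiff (μ := ν) t E
    rw [hνE', zero_add, symmDiff_comm] at this
    exact this.trans_lt hν
  calc μ.real E ≤ μ.real t + μ.real (t ∆ E) := measureReal_le_add_measureReal_symmDiff E t
    _ ≤ 0 + ε := by linarith [hCδ t htC hνt]

end Approximation

section Cylinders

open Set

variable {X : Type*} [MeasurableSpace X]

lemma measurable_proj (n : ℕ) : Measurable (proj (A := X) n) :=
  measurable_pi_lambda _ fun _ => measurable_pi_apply _

instance (ρ : Measure (ℕ → X)) [IsProbabilityMeasure ρ] (n : ℕ) :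
    IsProbabilityMeasure (ρ.map (proj n)) :=
  Measure.isProbabilityMeasure_map (measurable_proj n).aemeasurable

lemma exists_eq_preimage_proj_of_mem_measurableCylinders {t : Set (ℕ → X)}
    (ht : t ∈ measurableCylinders fun _ : ℕ => X) :
    ∃ n F, MeasurableSet F ∧ t = proj n ⁻¹' F := by
  rw [measurableCylinders_nat] at ht
  simp only [mem_iUnion, mem_singleton_iff] at ht
  obtain ⟨a, S, hS, rfl⟩ := ht
  let restrictIic : (Fin (a + 1) → X) → (Finset.Iic a → X) :=
    fun y i => y ⟨i, Nat.lt_succ_of_le (Finset.mem_Iic.1 i.2)⟩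
  exact ⟨a + 1, restrictIic ⁻¹' S,
    (measurable_pi_lambda _ fun _ => measurable_pi_apply _) hS, rfl⟩

end Cylinders

open InformationTheory Real

/-- If `ν` is an ergodic shift-invariant Borel probability measure, `μ`
is a shift-invariant Borel probability measure, and `sup_n H_{Λ_n}(μ|ν) < ∞`, then
`μ = ν`. -/
theorem statement13
    (ν μ : Measure (ℕ → A)) [IsProbabilityMeasure ν] [IsProbabilityMeasure μ]
    (hν : Ergodic shift ν) (hμ : μ.map shift = μ)
    (C : ℝ) (hC : ∀ n : ℕ, relEntN n μ ν ≤ ((C : ℝ) : EReal)) :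
    μ = ν := by
  set K := max C 0
  have hKL : ∀ n, klDiv (μ.map (proj n)) (ν.map (proj n)) ≤ ENNReal.ofReal K := by
    intro n
    rw [← EReal.coe_ennreal_le_coe_ennreal_iff, EReal.coe_ennreal_ofReal,
      max_eq_left (le_max_right C 0), ← relEnt_eq_klDiv]
    exact (hC n).trans (EReal.coe_le_coe_iff.2 (le_max_left C 0))
  have hμν : μ ≪ ν := by
    refine absolutelyContinuous_of_isSetRing isSetRing_measurableCylinders
      (univ_mem_measurableCylinders _) generateFrom_measurableCylinders.symm
      fun ε hε => ⟨ε * exp (-(K + 1) / ε), by positivity, fun t ht hνt => ?_⟩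
    obtain ⟨n, F, hF, rfl⟩ := exists_eq_preimage_proj_of_mem_measurableCylinders ht
    rw [← map_measureReal_apply (measurable_proj n) hF] at hνt ⊢
    exact measureReal_le_of_klDiv_le (hKL n) (le_max_right C 0) hε hF hνt
  exact hν.eq_of_absolutelyContinuous ⟨hν.measurable, hμ⟩ hμν

end Paper
end
end
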